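/- The double series ∑_{n=1}^∞ ∑_{x ∈ Y_n} exp(-β ∑_{j=0}^{n-1} F(σ^j(x))) is finite if and only if β > β₀, where β₀ is the unique positive real with ∑_{k=1}^∞ exp(-β₀ H_k) = 1. -/
import Mathlib


open MeasureTheory Real Filter Set
open scoped ENNReal

noncomputable def harmonicNum (k : ℕ) : ℝ := ∑ j ∈ Finset.range k, (1 : ℝ) / (j + 1)

def shift (x : ℕ → Bool) : ℕ → Bool := fun n => x (n + 1)

def oneInf : ℕ → Bool := fun _ => true

open Classical in
noncomputable def F (x : ℕ → Bool) : ℝ :=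
  if h : ∃ i, x i = false then 1 / ((Nat.find h : ℝ) + 1) else 0

def ConformalMeasure (β : ℝ) (μ : Measure (ℕ → Bool)) : Prop :=
  ∀ A : Set (ℕ → Bool), MeasurableSet A → Set.InjOn shift A →
    μ (shift '' A) = ∫⁻ x in A, ENNReal.ofReal (Real.exp (β * F x)) ∂μ

def Y : ℕ → Set (ℕ → Bool)
  | 0 => {oneInf}
  | n + 1 => {x | shift^[n + 1] x = oneInf} \ {x | shift^[n] x = oneInf}

def prepend (k : ℕ) (y : ℕ → Bool) : ℕ → Bool :=
  fun i => if i < k - 1 then true else if i = k - 1 then false else y (i - k)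

noncomputable def Z (β : ℝ) (n : ℕ) : ℝ :=
  ∑' x : Y n, Real.exp (-β * ∑ j ∈ Finset.range n, F (shift^[j] (x : ℕ → Bool)))

lemma shift_iter (m : ℕ) (x : ℕ → Bool) (i : ℕ) : shift^[m] x i = x (i + m) := by
  induction m generalizing x i with
  | zero => rfl
  | succ m ih =>
    rw [Function.iterate_succ_apply]
    rw [ih]
    simp [shift, Nat.add_assoc]

lemma mem_Y_succ (n : ℕ) (x : ℕ → Bool) :
    x ∈ Y (n + 1) ↔ x n = false ∧ ∀ i, n < i → x i = true := by
  constructor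
  · rintro ⟨h1, h2⟩
    simp only [Set.mem_setOf_eq] at h1 h2
    have ht : ∀ i, n < i → x i = true := by
      intro i hi
      have := congrFun h1 (i - (n+1))
      rw [shift_iter] at this
      simpa [oneInf, Nat.sub_add_cancel hi] using this
    refine ⟨?_, ht⟩
    by_contra hxn
    apply h2
    funext i
    rw [shift_iter, oneInf]
    rcases Nat.eq_or_lt_of_le (Nat.le_add_left n i) with h | h
    · cases i with
      | zero => simpa using Bool.not_eq_false _ |>.mp (by simpa using hxn)
      | succ i => exact ht _ (by omega)
    · exact ht _ h
  · rintro ⟨h1, h2⟩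
    constructor
    · funext i; rw [shift_iter, oneInf]; exact h2 _ (by omega)
    · intro h
      have := congrFun h 0
      rw [shift_iter] at this
      simp [oneInf, h1] at this

lemma mem_Y_zero (x : ℕ → Bool) : x ∈ Y 0 ↔ x = oneInf := Iff.rfl

lemma F_first (x : ℕ → Bool) (m : ℕ) (hm : x m = false) (h : ∀ i, i < m → x i = true) :
    F x = 1 / ((m : ℝ) + 1) := by
  classical
  have hex : ∃ i, x i = false := ⟨m, hm⟩
  rw [F, dif_pos hex]
  have : Nat.find hex = m := by
    rw [Nat.find_eq_iff]
    exact ⟨hm, fun i hi => by simp [h i hi]⟩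
  rw [this]

lemma prepend_lt (k : ℕ) (y : ℕ → Bool) (i : ℕ) (hi : i < k) : prepend (k+1) y i = true := by
  simp [prepend, hi]

lemma prepend_eq (k : ℕ) (y : ℕ → Bool) : prepend (k+1) y k = false := by
  simp [prepend]

lemma prepend_gt (k : ℕ) (y : ℕ → Bool) (i : ℕ) (hi : k < i) :
    prepend (k+1) y i = y (i - (k+1)) := by
  have h1 : ¬ i < (k+1) - 1 := by omega
  have h2 : ¬ i = (k+1) - 1 := by omega
  simp only [prepend, if_neg h1, if_neg h2]

lemma shift_prepend (k j : ℕ) (y : ℕ → Bool) (hj : k < j) :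
    shift^[j] (prepend (k+1) y) = shift^[j - (k+1)] y := by
  funext i
  rw [shift_iter, shift_iter, prepend_gt k y _ (by omega)]
  congr 1
  omega

lemma F_shift_prepend (k j : ℕ) (y : ℕ → Bool) (hj : j ≤ k) :
    F (shift^[j] (prepend (k+1) y)) = 1 / ((k - j : ℕ) + 1 : ℝ) := by
  apply F_first
  · rw [shift_iter]
    have : k - j + j = k := by omega
    rw [this, prepend_eq]
  · intro i hi
    rw [shift_iter]
    exact prepend_lt k y _ (by omega)

lemma exponent_identity (n k : ℕ) (hk : k ≤ n) (y : ℕ → Bool) :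
    ∑ j ∈ Finset.range (n + 1), F (shift^[j] (prepend (k+1) y)) =
      harmonicNum (k + 1) + ∑ j ∈ Finset.range (n - k), F (shift^[j] y) := by
  have hsplit : n + 1 = (k + 1) + (n - k) := by omega
  rw [hsplit, Finset.sum_range_add]
  congr 1
  · rw [harmonicNum]
    rw [← Finset.sum_range_reflect]
    apply Finset.sum_congr rfl
    intro j hj
    simp only [Finset.mem_range] at hj
    have h1 : k + 1 - 1 - j = k - j := by omega
    rw [h1, F_shift_prepend k (k - j) y (by omega)]
    have h2 : k - (k - j) = j := by omega
    rw [h2]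
  · apply Finset.sum_congr rfl
    intro j hj
    rw [shift_prepend k (k + 1 + j) y (by omega)]
    congr 2
    omega

lemma Y_tail (n : ℕ) (x : ℕ → Bool) (hx : x ∈ Y n) (i : ℕ) (hi : n ≤ i) : x i = true := by
  cases n with
  | zero => rw [mem_Y_zero] at hx; rw [hx]; rfl
  | succ n => exact ((mem_Y_succ n x).mp hx).2 i (by omega)

instance Y_finite (n : ℕ) : Finite (Y n) := by
  apply Finite.of_injective (fun x : Y n => (fun i : Fin n => (x : ℕ → Bool) i))
  intro x y h
  apply Subtype.ext
  funext i
  rcases lt_or_ge i n with hi | hi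
  · exact congrFun h ⟨i, hi⟩
  · rw [Y_tail n x x.2 i hi, Y_tail n y y.2 i hi]

lemma prepend_mem (n k : ℕ) (hk : k ≤ n) (y : ℕ → Bool) (hy : y ∈ Y (n - k)) :
    prepend (k+1) y ∈ Y (n + 1) := by
  rw [mem_Y_succ]
  constructor
  · rcases Nat.eq_or_lt_of_le hk with h | h
    · subst h; exact prepend_eq k y
    · rw [prepend_gt k y n h]
      have hnk : n - k = (n - k - 1) + 1 := by omega
      rw [hnk] at hy
      have := ((mem_Y_succ _ y).mp hy).1
      have hidx : n - (k+1) = n - k - 1 := by omega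
      rw [hidx]; exact this
  · intro i hi
    rw [prepend_gt k y i (by omega)]
    exact Y_tail (n - k) y hy _ (by omega)

noncomputable instance Y_fintype (n : ℕ) : Fintype (Y n) := Fintype.ofFinite _

def eFun (n : ℕ) : (Σ k : Fin (n+1), Y (n - (k:ℕ))) → Y (n+1) := fun p =>
  ⟨prepend ((p.1:ℕ)+1) p.2, prepend_mem n p.1 (by omega) p.2 p.2.2⟩

lemma eFun_bijective (n : ℕ) : Function.Bijective (eFun n) := by
  constructor
  · rintro ⟨k, y⟩ ⟨k', y'⟩ h
    have heq : prepend ((k:ℕ)+1) (y:ℕ→Bool) = prepend ((k':ℕ)+1) (y':ℕ→Bool) :=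
      congrArg Subtype.val h
    have hkk : (k:ℕ) = (k':ℕ) := by
      by_contra hne
      rcases Nat.lt_or_ge (k:ℕ) (k':ℕ) with hlt | hge
      · have h1 := congrFun heq (k:ℕ)
        rw [prepend_eq, prepend_lt _ _ _ hlt] at h1
        exact Bool.false_ne_true h1
      · have hlt : (k':ℕ) < (k:ℕ) := by omega
        have h1 := congrFun heq (k':ℕ)
        rw [prepend_eq, prepend_lt _ _ _ hlt] at h1
        exact Bool.false_ne_true h1.symm
    have hk : k = k' := Fin.ext hkk
    subst hk
    have hy : y = y' := by
      apply Subtype.ext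
      funext i
      have h1 := congrFun heq (i + ((k:ℕ)+1))
      rw [prepend_gt _ _ _ (by omega), prepend_gt _ _ _ (by omega)] at h1
      simpa using h1
    rw [hy]
  · rintro ⟨x, hx⟩
    obtain ⟨hxn, htail⟩ := (mem_Y_succ n x).mp hx
    have hex : ∃ i, x i = false := ⟨n, hxn⟩
    classical
    set k := Nat.find hex with hkdef
    have hkn : k ≤ n := Nat.find_min' hex hxn
    set y : ℕ → Bool := fun i => x (i + (k+1)) with hydef
    have hy : y ∈ Y (n - k) := by
      rcases Nat.eq_or_lt_of_le hkn with h | h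
      · have : n - k = 0 := by omega
        rw [this, mem_Y_zero]
        funext i
        exact htail (i + (k+1)) (by omega)
      · have hnk : n - k = (n - k - 1) + 1 := by omega
        rw [hnk, mem_Y_succ]
        constructor
        · show x ((n - k - 1) + (k+1)) = false
          have : (n - k - 1) + (k+1) = n := by omega
          rw [this]; exact hxn
        · intro i hi
          exact htail (i + (k+1)) (by omega)
    refine ⟨⟨⟨k, by omega⟩, ⟨y, hy⟩⟩, ?_⟩
    apply Subtype.ext
    funext i
    show prepend (k+1) y i = x i
    rcases Nat.lt_trichotomy i k with hi | hi | hi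
    · rw [prepend_lt _ _ _ hi]
      have := Nat.find_min hex hi
      cases hxi : x i with
      | false => exact absurd hxi this
      | true => rfl
    · subst hi
      rw [prepend_eq]
      exact (Nat.find_spec hex).symm
    · rw [prepend_gt _ _ _ hi]
      show x (i - (k+1) + (k+1)) = x i
      congr 1
      omega

lemma Z_zero (β : ℝ) : Z β 0 = 1 := by
  rw [Z]
  simp only [Finset.range_zero, Finset.sum_empty, mul_zero, Real.exp_zero]
  exact tsum_singleton oneInf (fun _ => (1:ℝ))

lemma Z_succ (β : ℝ) (n : ℕ) :
    Z β (n + 1) = ∑ k ∈ Finset.range (n + 1),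
      Real.exp (-β * harmonicNum (k + 1)) * Z β (n - k) := by
  classical
  rw [Z, tsum_fintype]
  rw [← Fintype.sum_bijective (eFun n) (eFun_bijective n)
      (fun p => Real.exp (-β * ∑ j ∈ Finset.range (n+1), F (shift^[j] ((eFun n p : Y (n+1)) : ℕ → Bool))))
      (fun x => Real.exp (-β * ∑ j ∈ Finset.range (n+1), F (shift^[j] ((x : Y (n+1)) : ℕ → Bool))))
      (fun p => rfl)]
  rw [← Finset.univ_sigma_univ, Finset.sum_sigma]
  rw [← Fin.sum_univ_eq_sum_range (fun k => Real.exp (-β * harmonicNum (k + 1)) * Z β (n - k)) (n+1)]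
  apply Finset.sum_congr rfl
  intro k _
  have hk : (k : ℕ) ≤ n := by omega
  rw [Z, tsum_fintype, Finset.mul_sum]
  apply Finset.sum_congr rfl
  intro y _
  show Real.exp (-β * ∑ j ∈ Finset.range (n+1), F (shift^[j] (prepend ((k:ℕ)+1) (y : ℕ → Bool)))) = _
  rw [exponent_identity n (k:ℕ) hk (y : ℕ → Bool), mul_add, Real.exp_add]

lemma Z_nonneg (β : ℝ) (n : ℕ) : 0 ≤ Z β n :=
  tsum_nonneg (fun _ => (Real.exp_pos _).le)

lemma tri (g : ℕ → ℕ → ℝ) (N : ℕ) :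
    ∑ n ∈ Finset.range N, ∑ k ∈ Finset.range (n+1), g k (n - k)
      = ∑ k ∈ Finset.range N, ∑ m ∈ Finset.range (N - k), g k m := by
  induction N with
  | zero => simp
  | succ N ih =>
    rw [Finset.sum_range_succ, ih,
      Finset.sum_range_succ (fun k => ∑ m ∈ Finset.range (N + 1 - k), g k m)]
    have h1 : ∀ k ∈ Finset.range N, ∑ m ∈ Finset.range (N + 1 - k), g k m
        = (∑ m ∈ Finset.range (N - k), g k m) + g k (N - k) := by
      intro k hk
      simp only [Finset.mem_range] at hk
      have h : N + 1 - k = (N - k) + 1 := by omega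
      rw [h, Finset.sum_range_succ]
    rw [Finset.sum_congr rfl h1, Finset.sum_add_distrib]
    have h2 : N + 1 - N = 1 := by omega
    rw [h2, Finset.sum_range_succ (fun k => g N k)]
    simp only [Finset.range_zero, Finset.sum_empty, zero_add, Finset.sum_range_succ]
    rw [Nat.sub_self, add_assoc]

lemma P_eq (β : ℝ) (N : ℕ) :
    ∑ n ∈ Finset.range N, Z β (n + 1)
      = ∑ k ∈ Finset.range N, Real.exp (-β * harmonicNum (k + 1))
          * ∑ m ∈ Finset.range (N - k), Z β m := by
  have h := tri (fun k m => Real.exp (-β * harmonicNum (k + 1)) * Z β m) N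
  calc ∑ n ∈ Finset.range N, Z β (n + 1)
      = ∑ n ∈ Finset.range N, ∑ k ∈ Finset.range (n+1),
          Real.exp (-β * harmonicNum (k + 1)) * Z β (n - k) := by
        apply Finset.sum_congr rfl; intro n _; rw [Z_succ]
    _ = ∑ k ∈ Finset.range N, ∑ m ∈ Finset.range (N - k),
          Real.exp (-β * harmonicNum (k + 1)) * Z β m := h
    _ = _ := by
        apply Finset.sum_congr rfl; intro k _; rw [Finset.mul_sum]

lemma harmonicNum_pos' (k : ℕ) : 0 < harmonicNum (k + 1) := by
  rw [harmonicNum]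
  apply Finset.sum_pos
  · intro j _; positivity
  · exact ⟨0, by simp⟩

lemma sum_range_Z_eq (β : ℝ) (N : ℕ) :
    ∑ m ∈ Finset.range (N + 1), Z β m = 1 + ∑ m ∈ Finset.range N, Z β (m + 1) := by
  rw [Finset.sum_range_succ' (fun m => Z β m) N, Z_zero, add_comm]

open scoped Topology

theorem double_series_finite_iff (β β₀ : ℝ) (hβ₀pos : 0 < β₀)
    (hβ₀ : ∑' k : ℕ, Real.exp (-β₀ * harmonicNum (k + 1)) = 1) :
    Summable (fun n : ℕ => Z β (n + 1)) ↔ β₀ < β := by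
  set a : ℕ → ℝ := fun k => Real.exp (-β * harmonicNum (k + 1)) with ha
  set a₀ : ℕ → ℝ := fun k => Real.exp (-β₀ * harmonicNum (k + 1)) with ha₀
  have hsum₀ : Summable a₀ := by
    by_contra h
    rw [tsum_eq_zero_of_not_summable h] at hβ₀
    exact one_ne_zero hβ₀.symm
  constructor
  · intro hS
    by_contra hβ
    push_neg at hβ
    have hge : ∀ k, a₀ k ≤ a k := fun k =>
      Real.exp_le_exp.mpr (by nlinarith [harmonicNum_pos' k])
    set S := ∑' n, Z β (n + 1) with hSdef
    have hPle : ∀ N, ∑ n ∈ Finset.range N, Z β (n + 1) ≤ S :=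
      fun N => Summable.sum_le_tsum _ (fun i _ => Z_nonneg β _) hS
    have hS0 : 0 ≤ S := tsum_nonneg fun _ => Z_nonneg β _
    have key : ∀ K N,
        (∑ k ∈ Finset.range K, a k) * (1 + ∑ n ∈ Finset.range N, Z β (n + 1)) ≤ S := by
      intro K N
      have h1 : ∑ n ∈ Finset.range (N + K), Z β (n + 1)
          = ∑ k ∈ Finset.range (N + K), a k * ∑ m ∈ Finset.range (N + K - k), Z β m :=
        P_eq β (N + K)
      have h2 : ∑ k ∈ Finset.range K, a k * ∑ m ∈ Finset.range (N + 1), Z β m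
          ≤ ∑ k ∈ Finset.range K, a k * ∑ m ∈ Finset.range (N + K - k), Z β m := by
        apply Finset.sum_le_sum
        intro k hk
        simp only [Finset.mem_range] at hk
        apply mul_le_mul_of_nonneg_left _ (Real.exp_pos _).le
        apply Finset.sum_le_sum_of_subset_of_nonneg
          (Finset.range_subset_range.mpr (by omega)) (fun m _ _ => Z_nonneg β m)
      have h3 : ∑ k ∈ Finset.range K, a k * ∑ m ∈ Finset.range (N + K - k), Z β m
          ≤ ∑ k ∈ Finset.range (N + K), a k * ∑ m ∈ Finset.range (N + K - k), Z β m := by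
        apply Finset.sum_le_sum_of_subset_of_nonneg (Finset.range_subset_range.mpr (by omega))
        intro k _ _
        exact mul_nonneg (Real.exp_pos _).le (Finset.sum_nonneg fun m _ => Z_nonneg β m)
      have h4 : ∑ k ∈ Finset.range K, a k * ∑ m ∈ Finset.range (N + 1), Z β m
          = (∑ k ∈ Finset.range K, a k) * (1 + ∑ n ∈ Finset.range N, Z β (n + 1)) := by
        rw [Finset.sum_mul]
        apply Finset.sum_congr rfl
        intro k _
        rw [sum_range_Z_eq]
      rw [← h4]
      calc ∑ k ∈ Finset.range K, a k * ∑ m ∈ Finset.range (N + 1), Z β m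
          ≤ ∑ k ∈ Finset.range (N + K), a k * ∑ m ∈ Finset.range (N + K - k), Z β m :=
            le_trans h2 h3
        _ = ∑ n ∈ Finset.range (N + K), Z β (n + 1) := h1.symm
        _ ≤ S := hPle _
    have htend : Tendsto (fun N => ∑ n ∈ Finset.range N, Z β (n + 1)) atTop (𝓝 S) :=
      hS.hasSum.tendsto_sum_nat
    have key2 : ∀ K, (∑ k ∈ Finset.range K, a k) * (1 + S) ≤ S := by
      intro K
      have ht : Tendsto (fun N => (∑ k ∈ Finset.range K, a k)
          * (1 + ∑ n ∈ Finset.range N, Z β (n + 1))) atTop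
          (𝓝 ((∑ k ∈ Finset.range K, a k) * (1 + S))) :=
        ((tendsto_const_nhds.add htend).const_mul _)
      exact le_of_tendsto ht (Filter.Eventually.of_forall (key K))
    have hc1 : S / (1 + S) < 1 := (div_lt_one (by linarith)).mpr (by linarith)
    have hAc : ∀ K, ∑ k ∈ Finset.range K, a₀ k ≤ S / (1 + S) := by
      intro K
      have h1 : ∑ k ∈ Finset.range K, a₀ k ≤ ∑ k ∈ Finset.range K, a k :=
        Finset.sum_le_sum fun k _ => hge k
      have h2 : (∑ k ∈ Finset.range K, a k) ≤ S / (1 + S) := by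
        rw [le_div_iff₀ (by linarith : (0:ℝ) < 1 + S)]
        exact key2 K
      linarith
    have htend₀ : Tendsto (fun K => ∑ k ∈ Finset.range K, a₀ k) atTop (𝓝 1) := by
      have := hsum₀.hasSum.tendsto_sum_nat
      rwa [hβ₀] at this
    obtain ⟨K, hK⟩ := (htend₀.eventually (eventually_gt_nhds hc1)).exists
    exact absurd (hAc K) (not_le.mpr hK)
  · intro hβ
    have hle : ∀ k, a k ≤ a₀ k := fun k =>
      Real.exp_le_exp.mpr (by nlinarith [harmonicNum_pos' k])
    have hsum : Summable a := hsum₀.of_nonneg_of_le (fun k => (Real.exp_pos _).le) hle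
    set A := ∑' k, a k with hA
    have hA0 : 0 ≤ A := tsum_nonneg fun _ => (Real.exp_pos _).le
    have hA1 : A < 1 := by
      rw [← hβ₀]
      exact Summable.tsum_lt_tsum (fun k => hle k)
        (show a 0 < a₀ 0 from Real.exp_lt_exp.mpr (by nlinarith [harmonicNum_pos' 0]))
        hsum hsum₀
    apply summable_of_sum_range_le (c := A / (1 - A)) (fun n => Z_nonneg β _)
    intro N
    cases N with
    | zero =>
      simp only [Finset.range_zero, Finset.sum_empty]
      exact div_nonneg hA0 (by linarith)
    | succ M =>
      set P := ∑ n ∈ Finset.range (M + 1), Z β (n + 1) with hP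
      have hP0 : 0 ≤ P := Finset.sum_nonneg fun n _ => Z_nonneg β _
      have hPM : ∑ m ∈ Finset.range M, Z β (m + 1) ≤ P := by
        rw [hP, Finset.sum_range_succ]
        exact le_add_of_nonneg_right (Z_nonneg β _)
      have h2 : ∀ k ∈ Finset.range (M + 1),
          a k * ∑ m ∈ Finset.range (M + 1 - k), Z β m ≤ a k * (1 + P) := by
        intro k _
        apply mul_le_mul_of_nonneg_left _ (Real.exp_pos _).le
        calc ∑ m ∈ Finset.range (M + 1 - k), Z β m
            ≤ ∑ m ∈ Finset.range (M + 1), Z β m :=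
              Finset.sum_le_sum_of_subset_of_nonneg
                (Finset.range_subset_range.mpr (by omega)) (fun m _ _ => Z_nonneg β m)
          _ = 1 + ∑ m ∈ Finset.range M, Z β (m + 1) := sum_range_Z_eq β M
          _ ≤ 1 + P := by linarith
      have h3 : P ≤ (∑ k ∈ Finset.range (M + 1), a k) * (1 + P) := by
        conv_lhs => rw [hP, P_eq β (M + 1)]
        calc ∑ k ∈ Finset.range (M + 1), a k * ∑ m ∈ Finset.range (M + 1 - k), Z β m
            ≤ ∑ k ∈ Finset.range (M + 1), a k * (1 + P) := Finset.sum_le_sum h2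
          _ = (∑ k ∈ Finset.range (M + 1), a k) * (1 + P) := by rw [Finset.sum_mul]
      have h4 : (∑ k ∈ Finset.range (M + 1), a k) ≤ A :=
        Summable.sum_le_tsum _ (fun i _ => (Real.exp_pos _).le) hsum
      have h5 : P ≤ A * (1 + P) :=
        le_trans h3 (mul_le_mul_of_nonneg_right h4 (by linarith))
      rw [le_div_iff₀ (by linarith : (0:ℝ) < 1 - A)]
      nlinarith
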